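/- arXiv:1703.00287 — 6 statements merged into one kernel-verified Lean document; each statement's English description precedes it below -/
import Mathlib

section
/- Let n and k be positive integers with 2 ≤ 2k < n. Consider the graph G on vertex set Z_n where two distinct vertices are adjacent if and only if their cyclic distance (the minimum of |u−v| and n−|u−v|) is at most k−1. Then the largest clique in G has exactly k vertices. -/
/-- Cyclic distance in `ZMod n`: the smaller of the two distances along the cycle. -/
def cdist {n : ℕ} (u v : ZMod n) : ℕ := min (u - v).val (v - u).val

/-- The cyclic interval of length `k` with left end `i` in `ZMod n`. -/
def cInt {n : ℕ} (i : ZMod n) (k : ℕ) : Finset (ZMod n) :=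
  (Finset.range k).image (fun j : ℕ => (i + (j : ZMod n) : ZMod n))

/-- Distance between two cyclic intervals: minimum cyclic distance between elements. -/
noncomputable def iDist {n : ℕ} (I J : Finset (ZMod n)) : ℕ :=
  sInf {d | ∃ u ∈ I, ∃ v ∈ J, d = cdist u v}

/-!
An interval of `k` consecutive residues is a clique. Conversely, fix `u₀` in a clique `U`. Every
`v ∈ U` lies within `k - 1` of `u₀`, so either `v` or `v + k` lies in the interval `cInt u₀ k`.
Moving `v` in this way is injective on `U`: two elements of `U` differing by `k` would be at
cyclic distance `min k (n - k) = k`, as `2 * k ≤ n`. Hence `|U| ≤ k`.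
-/

section CyclicDistance

variable {n : ℕ}

theorem cdist_comm (u v : ZMod n) : cdist u v = cdist v u :=
  min_comm _ _

theorem cdist_add_left (i u v : ZMod n) : cdist (i + u) (i + v) = cdist u v := by
  simp only [cdist, add_sub_add_left_eq_sub]

theorem cdist_natCast_le {a b : ℕ} (hab : a ≤ b) (hb : b < n) :
    cdist (a : ZMod n) (b : ZMod n) ≤ b - a := by
  have hval : ((b : ZMod n) - a).val = b - a := by
    rw [← Nat.cast_sub hab, ZMod.val_cast_of_lt (by omega)]
  exact hval ▸ min_le_right _ _

theorem cdist_add_natCast_self [NeZero n] {m : ℕ} (hm : 2 * m ≤ n) (u : ZMod n) :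
    cdist (u + (m : ZMod n)) u = m := by
  obtain rfl | hm₀ := Nat.eq_zero_or_pos m
  · simp [cdist]
  have hval : (m : ZMod n).val = m := ZMod.val_cast_of_lt (by omega)
  have : NeZero (m : ZMod n) := ⟨fun h => by simp [h] at hval; omega⟩
  simp only [cdist, add_sub_cancel_left, sub_add_cancel_left, ZMod.val_neg_of_ne_zero, hval]
  omega

end CyclicDistance

section CyclicInterval

variable {n : ℕ}

theorem card_cInt {k : ℕ} (hk : k ≤ n) (i : ZMod n) : (cInt i k).card = k := by
  rw [cInt, Finset.card_image_of_injOn, Finset.card_range]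
  intro a ha b hb hab
  have hab' := congrArg ZMod.val (add_left_cancel hab)
  simp only [Finset.coe_range, Set.mem_Iio] at ha hb
  rwa [ZMod.val_cast_of_lt (by omega), ZMod.val_cast_of_lt (by omega)] at hab'

theorem mem_cInt_of_val_sub_lt [NeZero n] {i x : ZMod n} {k : ℕ} (h : (x - i).val < k) :
    x ∈ cInt i k :=
  Finset.mem_image.mpr ⟨(x - i).val, Finset.mem_range.mpr h, by simp⟩

theorem cdist_le_of_mem_cInt {k : ℕ} (hk : k ≤ n) {i u v : ZMod n}
    (hu : u ∈ cInt i k) (hv : v ∈ cInt i k) : cdist u v ≤ k - 1 := by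
  obtain ⟨a, ha, rfl⟩ := Finset.mem_image.mp hu
  obtain ⟨b, hb, rfl⟩ := Finset.mem_image.mp hv
  rw [Finset.mem_range] at ha hb
  rw [cdist_add_left]
  rcases le_total a b with hab | hba
  · exact (cdist_natCast_le hab (by omega)).trans (by omega)
  · exact (cdist_comm _ _ ▸ cdist_natCast_le hba (by omega)).trans (by omega)

end CyclicInterval

theorem card_le_of_pairwise_cdist_le {n r : ℕ} (hn : 2 * (r + 1) ≤ n) {U : Finset (ZMod n)}
    (hU : ∀ u ∈ U, ∀ v ∈ U, u ≠ v → cdist u v ≤ r) : U.card ≤ r + 1 := by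
  have : NeZero n := ⟨by omega⟩
  obtain rfl | ⟨u₀, hu₀⟩ := U.eq_empty_or_nonempty
  · simp
  let c : ZMod n := ((r + 1 : ℕ) : ZMod n)
  have hc : c.val = r + 1 := ZMod.val_cast_of_lt (by omega)
  let fold : ZMod n → ZMod n := fun v => if (v - u₀).val ≤ r then v else v + c
  have hmaps : Set.MapsTo fold U (cInt u₀ (r + 1)) := by
    intro v hv
    apply mem_cInt_of_val_sub_lt
    by_cases hnear : (v - u₀).val ≤ r
    · simp only [fold, if_pos hnear]
      omega
    · have hne : v ≠ u₀ := by rintro rfl; simp at hnear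
      have hback : (u₀ - v).val ≤ r := by
        have := hU v hv u₀ hu₀ hne
        simp only [cdist, min_le_iff] at this
        omega
      have hpos : 0 < (u₀ - v).val := ZMod.val_pos.mpr (sub_ne_zero.mpr hne.symm)
      have hsub : v + c - u₀ = c - (u₀ - v) := by ring
      have hle : (u₀ - v).val ≤ c.val := by omega
      simp only [fold, if_neg hnear, hsub, ZMod.val_sub hle]
      omega
  have hinj : Set.InjOn fold U := by
    intro v hv w hw hfold
    by_contra hvw
    have hfar : ∀ x y : ZMod n, x = y + c → cdist x y = r + 1 := by
      rintro x y rfl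
      exact cdist_add_natCast_self hn y
    simp only [fold] at hfold
    split_ifs at hfold
    · exact hvw hfold
    · have := hU v hv w hw hvw; rw [hfar v w hfold] at this; omega
    · have := hU w hw v hv (Ne.symm hvw); rw [hfar w v hfold.symm] at this; omega
    · exact hvw (add_right_cancel hfold)
  calc U.card ≤ (cInt u₀ (r + 1)).card := Finset.card_le_card_of_injOn fold hmaps hinj
    _ = r + 1 := card_cInt (by omega) u₀

theorem stmt0 (n k : ℕ) (hk : 1 ≤ k) (hn : 2 * k < n) :
    (∃ U : Finset (ZMod n), (∀ u ∈ U, ∀ v ∈ U, u ≠ v → cdist u v ≤ k - 1) ∧ U.card = k) ∧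
    (∀ U : Finset (ZMod n), (∀ u ∈ U, ∀ v ∈ U, u ≠ v → cdist u v ≤ k - 1) → U.card ≤ k) := by
  refine ⟨⟨cInt 0 k, fun u hu v hv _ => cdist_le_of_mem_cInt (by omega) hu hv,
    card_cInt (by omega) 0⟩, fun U hU => ?_⟩
  obtain ⟨r, rfl⟩ : ∃ r, k = r + 1 := ⟨k - 1, by omega⟩
  exact card_le_of_pairwise_cdist_le (by omega) hU
end

section
/- Let n and k be positive integers with 2 ≤ 2k < n, and let G be the graph on Z_n where two distinct vertices are adjacent iff their cyclic distance is at most k−1. If U ⊆ Z_n is a clique of size exactly k, then the elements of U are k consecutive elements modulo n, i.e., U = {i, i+1, ..., i+k−1} (mod n) for some i. -/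
/-- Auxiliary set: `U + {k, k+1, ..., k+t}` in `ZMod n`. -/
def Dt (n k : ℕ) (U : Finset (ZMod n)) (t : ℕ) : Finset (ZMod n) :=
  (Finset.range (t+1)).biUnion fun j => U.image fun u => u + ((k + j : ℕ) : ZMod n)

theorem stmt1 (n k : ℕ) (hk : 1 ≤ k) (hn : 2 * k < n)
    (U : Finset (ZMod n))
    (hclique : ∀ u ∈ U, ∀ v ∈ U, u ≠ v → cdist u v ≤ k - 1)
    (hcard : U.card = k) :
    ∃ i : ZMod n, U = cInt i k := by
  haveI : NeZero n := ⟨by omega⟩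
  have hUne : U.Nonempty := Finset.card_pos.mp (by omega)
  obtain ⟨u0, hu0⟩ := hUne
  -- successor step for Dt
  have hDsucc : ∀ t : ℕ, Dt n k U (t+1) = Dt n k U t ∪ (Dt n k U t).image (fun x => x + 1) := by
    intro t
    ext x
    simp only [Dt, Finset.mem_biUnion, Finset.mem_range, Finset.mem_image, Finset.mem_union]
    constructor
    · rintro ⟨j, hj, u, hu, rfl⟩
      by_cases hjt : j < t + 1
      · exact Or.inl ⟨j, hjt, u, hu, rfl⟩
      · have : j = t + 1 := by omega
        subst this
        refine Or.inr ⟨u + ((k + t : ℕ) : ZMod n), ⟨t, by omega, u, hu, rfl⟩, ?_⟩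
        push_cast
        ring
    · rintro (⟨j, hj, u, hu, rfl⟩ | ⟨z, ⟨j, hj, u, hu, rfl⟩, rfl⟩)
      · exact ⟨j, by omega, u, hu, rfl⟩
      · refine ⟨j + 1, by omega, u, hu, ?_⟩
        push_cast
        ring
  -- monotonicity
  have hDmono : ∀ s t : ℕ, s ≤ t → Dt n k U s ⊆ Dt n k U t := by
    intro s t hst
    apply Finset.biUnion_subset_biUnion_of_subset_left
    exact Finset.range_subset_range.mpr (by omega)
  -- disjointness at the top
  have hdisj : ∀ v ∈ U, v ∉ Dt n k U (n - 2*k) := by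
    intro v hv hmem
    simp only [Dt, Finset.mem_biUnion, Finset.mem_range, Finset.mem_image] at hmem
    obtain ⟨j, hj, u, hu, heq⟩ := hmem
    have hm1 : k ≤ k + j := by omega
    have hm2 : k + j ≤ n - k := by omega
    have hmn : k + j < n := by omega
    have hvu : v - u = ((k + j : ℕ) : ZMod n) := by rw [← heq]; ring
    have hval : (v - u).val = k + j := by rw [hvu]; exact ZMod.val_cast_of_lt hmn
    have hne : u ≠ v := by
      intro h
      subst h
      have : (u - u).val = 0 := by simp
      omega
    have hvune : v - u ≠ 0 := by
      intro h
      rw [h] at hval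
      simp at hval
      omega
    haveI : NeZero (v - u) := ⟨hvune⟩
    have hval2 : (u - v).val = n - (k + j) := by
      have : u - v = -(v - u) := by ring
      rw [this, ZMod.val_neg_of_ne_zero, hval]
    have hle := hclique u hu v hv hne
    rw [cdist, hval, hval2] at hle
    omega
  -- strict growth
  have hstep : ∀ t : ℕ, t + 1 ≤ n - 2*k → (Dt n k U t).card < (Dt n k U (t+1)).card := by
    intro t ht
    by_contra hle
    push_neg at hle
    have heq : Dt n k U t = Dt n k U (t+1) :=
      Finset.eq_of_subset_of_card_le (hDmono t (t+1) (by omega)) hle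
    have himg : (Dt n k U t).image (fun x => x + 1) ⊆ Dt n k U t := by
      intro x hx
      rw [heq, hDsucc t]
      exact Finset.mem_union_right _ hx
    have hclosed : ∀ x ∈ Dt n k U t, x + 1 ∈ Dt n k U t := by
      intro x hx
      exact himg (Finset.mem_image_of_mem _ hx)
    have hall : ∀ m : ℕ, ∀ x ∈ Dt n k U t, x + (m : ZMod n) ∈ Dt n k U t := by
      intro m
      induction m with
      | zero => intro x hx; simpa using hx
      | succ m ih =>
        intro x hx
        have := hclosed _ (ih x hx)
        have harith : x + ((m+1 : ℕ) : ZMod n) = x + (m : ZMod n) + 1 := by push_cast; ring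
        rw [harith]
        exact this
    -- base element
    have hbase : u0 + ((k + 0 : ℕ) : ZMod n) ∈ Dt n k U t := by
      simp only [Dt, Finset.mem_biUnion, Finset.mem_range, Finset.mem_image]
      exact ⟨0, by omega, u0, hu0, rfl⟩
    set b := u0 + ((k + 0 : ℕ) : ZMod n) with hb
    have hU0 : u0 ∈ Dt n k U t := by
      have : u0 = b + (((u0 - b).val : ℕ) : ZMod n) := by
        rw [ZMod.natCast_rightInverse (u0 - b)]
        ring
      rw [this]
      exact hall _ b hbase
    exact hdisj u0 hu0 (hDmono t (n - 2*k) (by omega) hU0)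
  -- chain of growth
  have hchain : ∀ d s : ℕ, s + d ≤ n - 2*k →
      (Dt n k U s).card + d ≤ (Dt n k U (s + d)).card := by
    intro d
    induction d with
    | zero => intro s _; simp
    | succ d ih =>
      intro s hs
      have h1 := ih s (by omega)
      have h2 := hstep (s + d) (by omega)
      have : s + (d + 1) = (s + d) + 1 := by omega
      rw [this]
      omega
  -- card of Dt 0
  have hD0 : Dt n k U 0 = U.image (fun u => u + ((k : ℕ) : ZMod n)) := by
    simp [Dt]
  have hD0card : (Dt n k U 0).card = k := by
    rw [hD0, Finset.card_image_of_injective _ (add_left_injective _), hcard]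
  -- top bound
  have htople : (Dt n k U (n - 2*k)).card ≤ n - k := by
    have hsub : Dt n k U (n - 2*k) ⊆ Finset.univ \ U := by
      intro x hx
      rw [Finset.mem_sdiff]
      refine ⟨Finset.mem_univ x, fun hxU => hdisj x hxU hx⟩
    calc (Dt n k U (n - 2*k)).card ≤ (Finset.univ \ U).card := Finset.card_le_card hsub
      _ = n - k := by
          rw [Finset.card_sdiff_of_subset (Finset.subset_univ U), Finset.card_univ, ZMod.card, hcard]
  -- |D 1| = k + 1
  have hD1card : (Dt n k U 1).card = k + 1 := by
    have hge : k + 1 ≤ (Dt n k U 1).card := by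
      have := hchain 1 0 (by omega)
      simpa [hD0card] using this
    have hle : (Dt n k U 1).card ≤ k + 1 := by
      have h1 := hchain (n - 2*k - 1) 1 (by omega)
      have h2 : 1 + (n - 2*k - 1) = n - 2*k := by omega
      rw [h2] at h1
      omega
    omega
  -- extract the boundary count
  have hsd1 : ((Dt n k U 0).image (fun x => x + 1) \ Dt n k U 0).card = 1 := by
    have h1 := Finset.card_sdiff_add_card ((Dt n k U 0).image (fun x => x + 1)) (Dt n k U 0)
    have h2 : (Dt n k U 0).image (fun x => x + 1) ∪ Dt n k U 0 = Dt n k U 1 := by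
      rw [hDsucc 0, Finset.union_comm]
    rw [h2, hD1card, hD0card] at h1
    omega
  -- transfer to U: |(U+1) \ U| = 1
  have hshift : ((U.image (fun u => u + 1)) \ U).card = 1 := by
    have himgeq : ((U.image (fun u => u + 1)) \ U).image (fun x => x + ((k : ℕ) : ZMod n))
        = (Dt n k U 0).image (fun x => x + 1) \ Dt n k U 0 := by
      rw [Finset.image_sdiff _ _ (add_left_injective _), hD0]
      congr 1
      rw [Finset.image_image, Finset.image_image]
      congr 1
      funext u
      simp only [Function.comp_apply]
      ring
    have := congrArg Finset.card himgeq
    rw [Finset.card_image_of_injective _ (add_left_injective _)] at this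
    rw [this, hsd1]
  -- |U \ (U+1)| = 1
  have hUX : (U \ (U.image (fun u => u + 1))).card = 1 := by
    have h1 := Finset.card_sdiff_add_card_inter U (U.image (fun u => u + 1))
    have h2 := Finset.card_sdiff_add_card_inter (U.image (fun u => u + 1)) U
    have h3 : (U.image (fun u => u + 1)).card = U.card :=
      Finset.card_image_of_injective _ (add_left_injective _)
    rw [Finset.inter_comm] at h2
    omega
  obtain ⟨y, hy⟩ := Finset.card_eq_one.mp hUX
  have hymem : y ∈ U \ (U.image (fun u => u + 1)) := by rw [hy]; exact Finset.mem_singleton_self y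
  rw [Finset.mem_sdiff] at hymem
  obtain ⟨hyU, hyX⟩ := hymem
  have hy1 : y - 1 ∉ U := by
    intro h
    apply hyX
    rw [Finset.mem_image]
    exact ⟨y - 1, h, by ring⟩
  have huniq : ∀ z ∈ U, z - 1 ∉ U → z = y := by
    intro z hz hz1
    have : z ∈ U \ (U.image (fun u => u + 1)) := by
      rw [Finset.mem_sdiff]
      refine ⟨hz, fun hmem => ?_⟩
      rw [Finset.mem_image] at hmem
      obtain ⟨u, hu, hu1⟩ := hmem
      have : u = z - 1 := by rw [← hu1]; ring
      rw [this] at hu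
      exact hz1 hu
    rw [hy] at this
    exact Finset.mem_singleton.mp this
  -- there exists something not in U
  have hexnot : ∃ x : ZMod n, x ∉ U := by
    by_contra h
    push_neg at h
    have husub : (Finset.univ : Finset (ZMod n)) ⊆ U := fun x _ => h x
    have := Finset.card_le_card husub
    rw [Finset.card_univ, ZMod.card, hcard] at this
    omega
  -- every element of U is y + j with j < k
  have hkey : ∀ w ∈ U, ∃ j < k, w = y + (j : ZMod n) := by
    intro w hw
    have hP : ∃ j : ℕ, w - ((j + 1 : ℕ) : ZMod n) ∉ U := by
      obtain ⟨x, hx⟩ := hexnot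
      have hwx : w - x ≠ 0 := by
        intro h
        have : w = x := by
          have := sub_eq_zero.mp h
          exact this
        rw [this] at hw
        exact hx hw
      have hvpos : 1 ≤ (w - x).val := by
        rcases Nat.eq_zero_or_pos (w - x).val with h | h
        · exact absurd ((ZMod.val_eq_zero _).mp h) hwx
        · omega
      refine ⟨(w - x).val - 1, ?_⟩
      have harith : ((w - x).val - 1 + 1 : ℕ) = (w - x).val := by omega
      rw [harith]
      have : w - (((w - x).val : ℕ) : ZMod n) = x := by
        rw [ZMod.natCast_rightInverse (w - x)]
        ring
      rw [this]
      exact hx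
    classical
    let m := Nat.find hP
    have hm : w - ((m + 1 : ℕ) : ZMod n) ∉ U := Nat.find_spec hP
    have hlt : ∀ t, t < m → w - ((t + 1 : ℕ) : ZMod n) ∈ U := by
      intro t ht
      by_contra hc
      exact (Nat.find_min hP ht) hc
    have hall : ∀ t, t ≤ m → w - ((t : ℕ) : ZMod n) ∈ U := by
      intro t ht
      cases t with
      | zero => simpa using hw
      | succ t => exact hlt t (by omega)
    -- m < k
    have hmk : m < k := by
      by_contra hge
      push_neg at hge
      have hinj : Set.InjOn (fun t : ℕ => w - (t : ZMod n)) (Finset.range (k+1)) := by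
        intro a ha b hb hab
        simp only [Finset.mem_coe, Finset.mem_range] at ha hb
        have : (a : ZMod n) = (b : ZMod n) := by
          have := sub_right_injective hab
          exact this
        have ha' : ((a : ℕ) : ZMod n).val = a := ZMod.val_cast_of_lt (by omega)
        have hb' : ((b : ℕ) : ZMod n).val = b := ZMod.val_cast_of_lt (by omega)
        rw [← ha', ← hb', this]
      have hmaps : ∀ t ∈ Finset.range (k+1), (fun t : ℕ => w - (t : ZMod n)) t ∈ U := by
        intro t ht
        rw [Finset.mem_range] at ht
        exact hall t (by omega)
      have := Finset.card_le_card_of_injOn _ hmaps hinj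
      rw [Finset.card_range, hcard] at this
      omega
    -- w - m is a left endpoint
    have hzm : w - ((m : ℕ) : ZMod n) ∈ U := hall m le_rfl
    have hzm1 : (w - ((m : ℕ) : ZMod n)) - 1 ∉ U := by
      have harith : (w - ((m : ℕ) : ZMod n)) - 1 = w - ((m + 1 : ℕ) : ZMod n) := by
        push_cast
        ring
      rw [harith]
      exact hm
    have hzy : w - ((m : ℕ) : ZMod n) = y := huniq _ hzm hzm1
    exact ⟨m, hmk, by rw [← hzy]; ring⟩
  -- conclude
  refine ⟨y, ?_⟩
  have hsub : U ⊆ cInt y k := by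
    intro w hw
    obtain ⟨j, hj, rfl⟩ := hkey w hw
    rw [cInt, Finset.mem_image]
    exact ⟨j, Finset.mem_range.mpr hj, rfl⟩
  have hcile : (cInt y k).card ≤ k := by
    calc (cInt y k).card ≤ (Finset.range k).card := Finset.card_image_le
      _ = k := Finset.card_range k
  exact Finset.eq_of_subset_of_card_le hsub (by omega)
end

section
/- Let k, b, n be positive integers with 2(k+b) ≤ n. If k+b+1 distinct cyclic intervals of length k are given in Z_n, then there exist two of them whose distance is at least b+1. -/
lemma my_cast_val_eq {n : ℕ} [NeZero n] (u : ZMod n) : ((u.val : ℕ) : ZMod n) = u := by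
  simp [ZMod.natCast_val, ZMod.cast_id]

lemma my_val_inj {n : ℕ} [NeZero n] {u v : ZMod n} (h : u.val = v.val) : u = v := by
  have h2 := congrArg (Nat.cast : ℕ → ZMod n) h
  rwa [my_cast_val_eq, my_cast_val_eq] at h2

lemma my_core {n m : ℕ} (hm : 1 ≤ m) (hn : 2 * m ≤ n) (P : Finset (ZMod n))
    (hP : P.card = m + 1) :
    ∃ x ∈ P, ∃ y ∈ P, m ≤ (y - x).val ∧ (y - x).val ≤ n - m := by
  haveI : NeZero n := ⟨by omega⟩
  by_contra hcon
  push_neg at hcon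
  obtain ⟨x0, hx0⟩ : P.Nonempty := Finset.card_pos.mp (by omega)
  have hrange : ∀ x ∈ P, (x - x0).val < m ∨ n - m < (x - x0).val := by
    intro x hx
    rcases lt_or_ge ((x - x0).val) m with h | h
    · exact Or.inl h
    · exact Or.inr (hcon x0 hx0 x hx h)
  set f : ZMod n → ℕ :=
    fun x => if (x - x0).val < m then (x - x0).val else (x - x0).val - (n - m) with hf
  have hmaps : ∀ x ∈ P, f x ∈ Finset.range m := by
    intro x hx
    have hlt := ZMod.val_lt (x - x0)
    rcases hrange x hx with h | h
    · simp [hf, h]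
    · simp only [hf, Finset.mem_range]
      split <;> omega
  have hltc : (Finset.range m).card < P.card := by simp [hP]
  obtain ⟨x, hx, y, hy, hxy, hfeq⟩ :=
    Finset.exists_ne_map_eq_of_card_lt_of_maps_to hltc hmaps
  have key : ∀ u ∈ P, ∀ v ∈ P, (u - x0).val < m → ¬ ((v - x0).val < m) → f u = f v → False := by
    intro u hu v hv h1 h2 hfe
    have hvlt := ZMod.val_lt (v - x0)
    simp only [hf, if_pos h1, if_neg h2] at hfe
    have h3 : n - m < (v - x0).val := (hrange v hv).resolve_left h2
    have hval : (v - x0).val = (u - x0).val + (n - m) := by omega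
    have heq : v - u = ((n - m : ℕ) : ZMod n) := by
      have step : (((u - x0).val + (n - m) : ℕ) : ZMod n) - (((u - x0).val : ℕ) : ZMod n)
          = ((n - m : ℕ) : ZMod n) := by push_cast; ring
      rw [← hval] at step
      rw [my_cast_val_eq, my_cast_val_eq] at step
      rw [← step]; ring
    have hval2 : (v - u).val = n - m := by
      rw [heq, ZMod.val_cast_of_lt (by omega)]
    have := hcon u hu v hv (by omega)
    omega
  rcases lt_or_ge ((x - x0).val) m with h1 | h1 <;>
    rcases lt_or_ge ((y - x0).val) m with h2 | h2
  · apply hxy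
    simp only [hf, if_pos h1, if_pos h2] at hfeq
    have h5 : x - x0 = y - x0 := my_val_inj hfeq
    have h6 := congrArg (· + x0) h5
    simpa using h6
  · exact key x hx y hy h1 (by omega) hfeq
  · exact key y hy x hx h2 (by omega) hfeq.symm
  · simp only [hf, if_neg (by omega : ¬ (x - x0).val < m),
      if_neg (by omega : ¬ (y - x0).val < m)] at hfeq
    have h3 : n - m < (x - x0).val := (hrange x hx).resolve_left (by omega)
    have h4 : n - m < (y - x0).val := (hrange y hy).resolve_left (by omega)
    have h5 : x - x0 = y - x0 := my_val_inj (by omega)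
    apply hxy
    have h6 := congrArg (· + x0) h5
    simpa using h6

lemma my_mem_cInt {n k : ℕ} {i u : ZMod n} : u ∈ cInt i k ↔ ∃ j < k, u = i + (j : ZMod n) := by
  simp [cInt, eq_comm]

lemma my_dist_bound {n k b : ℕ} [NeZero n] (hk : 0 < k) (hb : 0 < b) (hn : 2 * (k + b) ≤ n)
    (x y : ZMod n) (hd1 : k + b ≤ (y - x).val) (hd2 : (y - x).val ≤ n - (k + b)) :
    b + 1 ≤ iDist (cInt x k) (cInt y k) := by
  have hxmem : x ∈ cInt x k := my_mem_cInt.mpr ⟨0, hk, by simp⟩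
  have hymem : y ∈ cInt y k := my_mem_cInt.mpr ⟨0, hk, by simp⟩
  unfold iDist
  refine le_csInf ⟨cdist x y, x, hxmem, y, hymem, rfl⟩ ?_
  rintro d ⟨u, hu, v, hv, rfl⟩
  obtain ⟨j1, hj1, rfl⟩ := my_mem_cInt.mp hu
  obtain ⟨j2, hj2, rfl⟩ := my_mem_cInt.mp hv
  have hdn : (y - x).val < n := ZMod.val_lt _
  have hj1d : j1 ≤ (y - x).val + j2 := by omega
  have heq : (((y - x).val + j2 - j1 : ℕ) : ZMod n) = (y + (j2 : ZMod n)) - (x + (j1 : ZMod n)) := by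
    rw [Nat.cast_sub hj1d, Nat.cast_add, my_cast_val_eq]
    ring
  have hen : (y - x).val + j2 - j1 < n := by omega
  have hval : ((y + (j2 : ZMod n)) - (x + (j1 : ZMod n))).val = (y - x).val + j2 - j1 := by
    rw [← heq, ZMod.val_cast_of_lt hen]
  have hne : (y + (j2 : ZMod n)) - (x + (j1 : ZMod n)) ≠ 0 := by
    intro h0
    rw [h0, ZMod.val_zero] at hval
    omega
  have hvalneg : ((x + (j1 : ZMod n)) - (y + (j2 : ZMod n))).val
      = n - ((y - x).val + j2 - j1) := by
    have hneg : (x + (j1 : ZMod n)) - (y + (j2 : ZMod n))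
        = -((y + (j2 : ZMod n)) - (x + (j1 : ZMod n))) := by ring
    rw [hneg, ZMod.neg_val, if_neg hne, hval]
  unfold cdist
  rw [hval, hvalneg]
  omega

theorem stmt2 (k b n : ℕ) (hk : 0 < k) (hb : 0 < b) (hn : 2 * (k + b) ≤ n)
    (S : Finset (Finset (ZMod n))) (hS : ∀ I ∈ S, ∃ i, I = cInt i k)
    (hcard : S.card = k + b + 1) :
    ∃ I ∈ S, ∃ J ∈ S, I ≠ J ∧ b + 1 ≤ iDist I J := by
  haveI : NeZero n := ⟨by omega⟩
  classical
  set f : Finset (ZMod n) → ZMod n :=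
    fun I => if h : ∃ i, I = cInt i k then h.choose else 0 with hfdef
  have hfspec : ∀ I ∈ S, I = cInt (f I) k := by
    intro I hI
    have h := hS I hI
    simp only [hfdef, dif_pos h]
    exact h.choose_spec
  have hinj : Set.InjOn f S := by
    intro I hI J hJ h
    rw [hfspec I hI, hfspec J hJ, h]
  have hPcard : (S.image f).card = (k + b) + 1 := by
    rw [Finset.card_image_of_injOn hinj, hcard]
  obtain ⟨x, hx, y, hy, hd1, hd2⟩ := my_core (by omega) hn _ hPcard
  obtain ⟨I, hI, hIx⟩ := Finset.mem_image.mp hx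
  obtain ⟨J, hJ, hJy⟩ := Finset.mem_image.mp hy
  refine ⟨I, hI, J, hJ, ?_, ?_⟩
  · intro hIJ
    rw [hIJ, hJy] at hIx
    rw [hIx] at hd1
    simp at hd1
    omega
  · rw [hfspec I hI, hfspec J hJ, hIx, hJy]
    exact my_dist_bound hk hb hn x y hd1 hd2
end

section
/- Suppose rectangles R₁ = I₁×J₀ and R₂ = I₂×J₀ in Z_{n₁} × Z_{n₂} satisfy d(I₁,I₂) ≥ b+1 (a b-blocking pair with base J₀). Let U×V be a third rectangle with U ⊆ Z_{n₁}, V ⊆ Z_{n₂} cyclic intervals of lengths between 1 and b, such that U×V is proj-intersecting with both R₁ and R₂. Then J₀ ∩ V ≠ ∅. -/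
lemma val_natCast_le' {n : ℕ} (m : ℕ) : ((m : ZMod n)).val ≤ m := by
  cases n with
  | zero => simp only [ZMod.val]; exact le_of_eq (Int.natAbs_natCast m)
  | succ k => rw [ZMod.val_natCast]; exact Nat.mod_le _ _

lemma cdist_shift_le {n : ℕ} (u : ZMod n) {jx jy p : ℕ} (hx : jx < p) (hy : jy < p)
    (hle : jx ≤ jy) : cdist (u + (jx : ZMod n)) (u + (jy : ZMod n)) ≤ p - 1 := by
  have : (u + (jy : ZMod n)) - (u + (jx : ZMod n)) = ((jy - jx : ℕ) : ZMod n) := by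
    push_cast [Nat.cast_sub hle]
    ring
  calc cdist (u + (jx : ZMod n)) (u + (jy : ZMod n)) ≤ ((u + (jy : ZMod n)) - (u + (jx : ZMod n))).val :=
        min_le_right _ _
    _ = ((jy - jx : ℕ) : ZMod n).val := by rw [this]
    _ ≤ jy - jx := val_natCast_le' _
    _ ≤ p - 1 := by omega

theorem stmt4 (b n₁ n₂ a₁ a₂ c p q : ℕ)
    (hb : 0 < b) (hc : 1 ≤ c) (hp : 1 ≤ p) (hpb : p ≤ b) (hq : 1 ≤ q) (hqb : q ≤ b)
    (i₁ i₂ u : ZMod n₁) (j₀ v : ZMod n₂)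
    (hd : b + 1 ≤ iDist (cInt i₁ a₁) (cInt i₂ a₂))
    (h1 : (cInt u p ∩ cInt i₁ a₁).Nonempty ∨ (cInt v q ∩ cInt j₀ c).Nonempty)
    (h2 : (cInt u p ∩ cInt i₂ a₂).Nonempty ∨ (cInt v q ∩ cInt j₀ c).Nonempty) :
    (cInt j₀ c ∩ cInt v q).Nonempty := by
  rcases h1 with h1 | hV
  · rcases h2 with h2 | hV
    · exfalso
      obtain ⟨x, hx⟩ := h1
      obtain ⟨y, hy⟩ := h2
      rw [Finset.mem_inter] at hx hy
      obtain ⟨hxU, hx1⟩ := hx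
      obtain ⟨hyU, hy2⟩ := hy
      -- membership in cInt u p
      simp only [cInt, Finset.mem_image, Finset.mem_range] at hxU hyU
      obtain ⟨jx, hjx, rfl⟩ := hxU
      obtain ⟨jy, hjy, rfl⟩ := hyU
      have hmem : cdist (u + (jx : ZMod n₁)) (u + (jy : ZMod n₁)) ∈
          {d | ∃ a ∈ cInt i₁ a₁, ∃ b ∈ cInt i₂ a₂, d = cdist a b} :=
        ⟨_, hx1, _, hy2, rfl⟩
      have hge : b + 1 ≤ cdist (u + (jx : ZMod n₁)) (u + (jy : ZMod n₁)) := le_trans hd (Nat.sInf_le hmem)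
      have hle : cdist (u + (jx : ZMod n₁)) (u + (jy : ZMod n₁)) ≤ p - 1 := by
        rcases le_total jx jy with h | h
        · exact cdist_shift_le u hjx hjy h
        · have := cdist_shift_le u hjy hjx h
          simpa [cdist, min_comm] using this
      omega
    · rw [Finset.inter_comm] at hV; exact hV
  · rw [Finset.inter_comm] at hV; exact hV
end

section
/- Let k, ℓ, b, n₁, n₂ be positive integers with k, ℓ ≤ b, 2(k+b) < n₁, 2(ℓ+b) < n₂. Let R be a proj-intersecting family of k×ℓ rectangles in Z_{n₁} × Z_{n₂}. Suppose R contains ℓ b-blocking pairs of the form (I×J₀-type with base in Z_{n₂}) with ℓ pairwise distinct bases. Then there exists β ∈ Z_{n₂} contained in the Z_{n₂}-projection of every member of R. -/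
/-- `P` is a `k × ℓ` rectangle in `ZMod n₁ × ZMod n₂`. -/
def IsRect {n₁ n₂ : ℕ} (k ℓ : ℕ) (P : Finset (ZMod n₁) × Finset (ZMod n₂)) : Prop :=
  (∃ i, P.1 = cInt i k) ∧ (∃ j, P.2 = cInt j ℓ)

/-- A family of rectangles is proj-intersecting if any two members have intersecting
projections in at least one coordinate. -/
def ProjIntersecting {n₁ n₂ : ℕ} (R : Finset (Finset (ZMod n₁) × Finset (ZMod n₂))) : Prop :=
  ∀ P ∈ R, ∀ Q ∈ R, (P.1 ∩ Q.1).Nonempty ∨ (P.2 ∩ Q.2).Nonempty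

lemma mem_cInt' {n : ℕ} {β i : ZMod n} {k : ℕ} :
    β ∈ cInt i k ↔ ∃ e, e < k ∧ β = i + (e : ZMod n) := by
  simp only [cInt, Finset.mem_image, Finset.mem_range]
  constructor
  · rintro ⟨e, he, rfl⟩; exact ⟨e, he, rfl⟩
  · rintro ⟨e, he, rfl⟩; exact ⟨e, he, rfl⟩

lemma natCast_inj' {n a c : ℕ} (ha : a < n) (hc : c < n) (h : (a : ZMod n) = (c : ZMod n)) :
    a = c := by
  have := congrArg ZMod.val h
  rwa [ZMod.val_natCast_of_lt ha, ZMod.val_natCast_of_lt hc] at this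

lemma cdist_le_of_mem {n k : ℕ} (hk : k ≤ n) {x u v : ZMod n}
    (hu : u ∈ cInt x k) (hv : v ∈ cInt x k) : cdist u v ≤ k - 1 := by
  obtain ⟨a, ha, rfl⟩ := mem_cInt'.1 hu
  obtain ⟨c, hc, rfl⟩ := mem_cInt'.1 hv
  rcases le_total c a with h | h
  · have e1 : (x + (a : ZMod n)) - (x + (c : ZMod n)) = ((a - c : ℕ) : ZMod n) := by
      push_cast [Nat.cast_sub h]; ring
    calc cdist (x + (a : ZMod n)) (x + (c : ZMod n)) ≤ ((x + (a:ZMod n)) - (x + (c:ZMod n))).val :=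
          min_le_left _ _
      _ = a - c := by rw [e1, ZMod.val_natCast_of_lt (by omega)]
      _ ≤ k - 1 := by omega
  · have e1 : (x + (c : ZMod n)) - (x + (a : ZMod n)) = ((c - a : ℕ) : ZMod n) := by
      push_cast [Nat.cast_sub h]; ring
    calc cdist (x + (a : ZMod n)) (x + (c : ZMod n)) ≤ ((x + (c:ZMod n)) - (x + (a:ZMod n))).val :=
          min_le_right _ _
      _ = c - a := by rw [e1, ZMod.val_natCast_of_lt (by omega)]
      _ ≤ k - 1 := by omega

lemma iDist_le_cdist {n : ℕ} {I J : Finset (ZMod n)} {u v : ZMod n}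
    (hu : u ∈ I) (hv : v ∈ J) : iDist I J ≤ cdist u v :=
  Nat.sInf_le ⟨u, hu, v, hv, rfl⟩

lemma inter_cInt {n ℓ : ℕ} {i j : ZMod n} (h : (cInt i ℓ ∩ cInt j ℓ).Nonempty) :
    ∃ a c, a < ℓ ∧ c < ℓ ∧ i + (a : ZMod n) = j + (c : ZMod n) := by
  obtain ⟨w, hw⟩ := h
  rw [Finset.mem_inter] at hw
  obtain ⟨a, ha, hwa⟩ := mem_cInt'.1 hw.1
  obtain ⟨c, hc, hwc⟩ := mem_cInt'.1 hw.2
  exact ⟨a, c, ha, hc, by rw [← hwa, ← hwc]⟩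

theorem stmt5 (k ℓ b n₁ n₂ : ℕ) (hk : 0 < k) (hl : 0 < ℓ) (hkb : k ≤ b) (hlb : ℓ ≤ b)
    (h1 : 2 * (k + b) < n₁) (h2 : 2 * (ℓ + b) < n₂)
    (R : Finset (Finset (ZMod n₁) × Finset (ZMod n₂)))
    (hrect : ∀ P ∈ R, IsRect k ℓ P) (hproj : ProjIntersecting R)
    (Bs : Finset (Finset (ZMod n₂))) (hBs : Bs.card = ℓ)
    (hbase : ∀ J ∈ Bs, ∃ P ∈ R, ∃ Q ∈ R, P.2 = J ∧ Q.2 = J ∧ b + 1 ≤ iDist P.1 Q.1) :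
    ∃ β : ZMod n₂, ∀ P ∈ R, β ∈ P.2 := by
  haveI : NeZero n₂ := ⟨by omega⟩
  have hn2 : 4 * ℓ < n₂ := by omega
  -- Step A: every member's second projection meets every base.
  have hA : ∀ X ∈ R, ∀ J ∈ Bs, (X.2 ∩ J).Nonempty := by
    intro X hX J hJ
    obtain ⟨P, hP, Q, hQ, hP2, hQ2, hd⟩ := hbase J hJ
    rcases hproj X hX P hP with h | h
    · rcases hproj X hX Q hQ with h' | h'
      · exfalso
        obtain ⟨x1, hx1⟩ := (hrect X hX).1
        obtain ⟨u, hu⟩ := h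
        obtain ⟨v, hv⟩ := h'
        rw [Finset.mem_inter] at hu hv
        have hcd : cdist u v ≤ k - 1 := by
          apply cdist_le_of_mem (n := n₁) (by omega)
          · rw [← hx1]; exact hu.1
          · rw [← hx1]; exact hv.1
        have hcd2 : b + 1 ≤ cdist u v :=
          le_trans hd (iDist_le_cdist hu.2 hv.2)
        omega
      · rw [← hQ2]; exact h'
    · rw [← hP2]; exact h
  -- starts of the bases
  have hstart : ∀ J : Finset (ZMod n₂), ∃ j : ZMod n₂, J ∈ Bs → J = cInt j ℓ := by
    intro J
    by_cases hJ : J ∈ Bs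
    · obtain ⟨P, hP, _, _, hP2, _, _⟩ := hbase J hJ
      obtain ⟨j, hj⟩ := (hrect P hP).2
      exact ⟨j, fun _ => by rw [← hP2, hj]⟩
    · exact ⟨0, fun h => absurd h hJ⟩
  choose s hs using hstart
  have hBsne : Bs.Nonempty := Finset.card_pos.1 (by omega)
  obtain ⟨J₀, hJ₀⟩ := hBsne
  -- base membership witnesses in R
  have hmemR : ∀ J ∈ Bs, ∃ P ∈ R, P.2 = J := by
    intro J hJ
    obtain ⟨P, hP, _, _, hP2, _, _⟩ := hbase J hJ
    exact ⟨P, hP, hP2⟩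
  -- bases pairwise intersect
  have hBB : ∀ J ∈ Bs, ∀ J' ∈ Bs, (J ∩ J').Nonempty := by
    intro J hJ J' hJ'
    obtain ⟨P, hP, hP2⟩ := hmemR J hJ
    have := hA P hP J' hJ'
    rwa [hP2] at this
  -- the coordinate function
  set t : Finset (ZMod n₂) → ℕ := fun J => (s J - s J₀ + ((ℓ - 1 : ℕ) : ZMod n₂)).val with ht
  have htc : ∀ J, (t J : ZMod n₂) = s J - s J₀ + ((ℓ - 1 : ℕ) : ZMod n₂) :=
    fun J => ZMod.natCast_rightInverse _
  have htlt : ∀ J, t J < n₂ := fun J => ZMod.val_lt _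
  -- bound: t J ≤ 2ℓ - 2 for bases
  have htb : ∀ J ∈ Bs, t J ≤ 2 * ℓ - 2 := by
    intro J hJ
    obtain ⟨a, c, ha, hc, hac⟩ := by
      have := hBB J₀ hJ₀ J hJ
      rw [hs J₀ hJ₀, hs J hJ] at this
      exact inter_cInt this
    have key : (t J : ZMod n₂) = ((a + (ℓ - 1) - c : ℕ) : ZMod n₂) := by
      rw [htc]
      have h1 : ((a + (ℓ - 1) - c : ℕ) : ZMod n₂)
          = (a : ZMod n₂) + ((ℓ - 1 : ℕ) : ZMod n₂) - (c : ZMod n₂) := by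
        push_cast [Nat.cast_sub (by omega : c ≤ a + (ℓ - 1))]; ring
      rw [h1]
      linear_combination -hac
    have := natCast_inj' (htlt J) (by omega) key
    omega
  -- pairwise closeness
  have hpair : ∀ J ∈ Bs, ∀ J' ∈ Bs, t J ≤ t J' + (ℓ - 1) := by
    intro J hJ J' hJ'
    obtain ⟨a, c, ha, hc, hac⟩ := by
      have := hBB J hJ J' hJ'
      rw [hs J hJ, hs J' hJ'] at this
      exact inter_cInt this
    have key : ((t J + a : ℕ) : ZMod n₂) = ((t J' + c : ℕ) : ZMod n₂) := by
      push_cast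
      rw [htc, htc]
      linear_combination hac
    have hJb := htb J hJ
    have hJb' := htb J' hJ'
    have := natCast_inj' (by omega) (by omega) key
    omega
  -- injectivity of t on Bs
  have hinj : Set.InjOn t Bs := by
    intro J hJ J' hJ' hEq
    have : (t J : ZMod n₂) = (t J' : ZMod n₂) := by rw [hEq]
    rw [htc, htc] at this
    have hss : s J = s J' := by linear_combination this
    rw [hs J hJ, hs J' hJ', hss]
  set T : Finset ℕ := Bs.image t with hT
  have hTcard : T.card = ℓ := by rw [hT, Finset.card_image_of_injOn hinj, hBs]
  have hTne : T.Nonempty := by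
    rw [← Finset.card_pos, hTcard]; exact hl
  obtain ⟨Jm, hJm, hJmt⟩ := Finset.mem_image.1 (T.min'_mem hTne)
  obtain ⟨JM, hJM, hJMt⟩ := Finset.mem_image.1 (T.max'_mem hTne)
  have hMm : t JM ≤ t Jm + (ℓ - 1) := hpair JM hJM Jm hJm
  have hsub : T ⊆ Finset.Icc (t Jm) (t JM) := by
    intro x hx
    exact Finset.mem_Icc.2 ⟨hJmt ▸ T.min'_le x hx, hJMt ▸ T.le_max' x hx⟩
  have hcard2 : ℓ ≤ t JM + 1 - t Jm := by
    have := Finset.card_le_card hsub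
    rwa [hTcard, Nat.card_Icc] at this
  have hMeq : t JM = t Jm + (ℓ - 1) := by omega
  -- relation between extreme starts
  have hsMm : s JM = s Jm + ((ℓ - 1 : ℕ) : ZMod n₂) := by
    have h1 : (t JM : ZMod n₂) = ((t Jm + (ℓ - 1) : ℕ) : ZMod n₂) := by
      rw [hMeq]
    push_cast at h1
    rw [htc, htc] at h1
    linear_combination h1
  refine ⟨s JM, ?_⟩
  intro P hP
  obtain ⟨x, hx⟩ := (hrect P hP).2
  -- P.2 meets both extreme bases
  obtain ⟨a, c, ha, hc, hac⟩ := by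
    have := hA P hP Jm hJm
    rw [hx, hs Jm hJm] at this
    exact inter_cInt this
  obtain ⟨a', c', ha', hc', hac'⟩ := by
    have := hA P hP JM hJM
    rw [hx, hs JM hJM] at this
    exact inter_cInt this
  -- derive: a' + c = a + (ℓ-1) + c' as naturals
  have key : ((a' + c : ℕ) : ZMod n₂) = ((a + (ℓ - 1) + c' : ℕ) : ZMod n₂) := by
    push_cast
    have := hsMm
    linear_combination hac' - hac + this
  have keyN : a' + c = a + (ℓ - 1) + c' := by
    apply natCast_inj' (by omega) (by omega) key
  have hce : c' ≤ a' := by omega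
  have hβ : s JM = x + ((a' - c' : ℕ) : ZMod n₂) := by
    have h1 : ((a' : ℕ) : ZMod n₂) = ((a' - c' : ℕ) : ZMod n₂) + (c' : ZMod n₂) := by
      push_cast [Nat.cast_sub hce]; ring
    linear_combination h1 - hac'
  rw [hx]
  exact mem_cInt'.2 ⟨a' - c', by omega, hβ⟩
end

section
/- Let X₁, X₂ be disjoint finite sets with |X₁| = n₁, |X₂| = n₂, and let positive integers k, ℓ satisfy 2k ≤ n₁, 2ℓ ≤ n₂. If F is an intersecting family of subsets of X₁ ∪ X₂ such that every F ∈ F satisfies |F ∩ X₁| = k and |F ∩ X₂| = ℓ, then |F| ≤ max( C(n₁−1,k−1)·C(n₂,ℓ), C(n₁,k)·C(n₂−1,ℓ−1) ). -/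
/-!
Katona's circle method on a product of two cycles. Fix cyclic orders of `X₁` and `X₂`. The
members of `F` whose traces on `X₁` and `X₂` are arcs (of lengths `k` and `ℓ`) correspond to
pairs `(i, j)` of starting points, and since `F` is intersecting, any two such pairs are close
in one coordinate: at distance `< k` on the first cycle or `< ℓ` on the second. A set of such
pairs has at most `max (k n₂) (ℓ n₁)` elements: a column holds at most `n₁` pairs, two far
apart nonempty columns hold at most `2k` together (Katona's bound for cross-intersecting arcs),
and after deleting empty columns until none is left or the cycle has length `2ℓ`, pairing each
column with the opposite one gives the bound. Every member of `F` is counted for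
`n₁ k! (n₁ - k)! · n₂ ℓ! (n₂ - ℓ)!` of the `n₁! n₂!` pairs of orders.
-/

open Finset
open scoped Fin.NatCast Nat

namespace KatonaCircle

section EquivCount

variable {α β : Type*} [Fintype α] [Fintype β] [DecidableEq α] [DecidableEq β]
  (p : α → Prop) (q : β → Prop) [DecidablePred p] [DecidablePred q]

def equivPreservingEquivProd :
    {e : α ≃ β // ∀ a, p a ↔ q (e a)} ≃
      ({a // p a} ≃ {b // q b}) × ({a // ¬p a} ≃ {b // ¬q b}) where
  toFun e := (e.1.subtypeEquiv e.2, e.1.subtypeEquiv fun a => not_congr (e.2 a))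
  invFun f := ⟨(Equiv.sumCompl p).symm.trans ((f.1.sumCongr f.2).trans (Equiv.sumCompl q)),
    fun a => by by_cases ha : p a <;> simp [ha, (f.1 _).2, (f.2 _).2]⟩
  left_inv e := by ext a; by_cases ha : p a <;> simp [ha]
  right_inv f := by ext <;> simp

theorem card_equiv_preserving (hαβ : Fintype.card α = Fintype.card β)
    (hpq : Fintype.card {a // p a} = Fintype.card {b // q b}) :
    #({e | ∀ a, p a ↔ q (e a)} : Finset (α ≃ β)) =
      (Fintype.card {a // p a})! * (Fintype.card {a // ¬p a})! := by
  have hpq' : Fintype.card {a // ¬p a} = Fintype.card {b // ¬q b} := by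
    simp only [Fintype.card_subtype_compl, hαβ, hpq]
  rw [← Fintype.card_subtype, Fintype.card_congr (equivPreservingEquivProd p q), Fintype.card_prod,
    Fintype.card_equiv (Fintype.equivOfCardEq hpq), Fintype.card_equiv (Fintype.equivOfCardEq hpq')]

end EquivCount

section Circle

variable {n : ℕ}

def cycDist (a b : Fin n) : ℕ := min (a - b).val (b - a).val

lemma cycDist_comm (a b : Fin n) : cycDist a b = cycDist b a := min_comm _ _

lemma cycDist_self (a : Fin n) : cycDist a a = 0 := by
  simp [cycDist, Fin.coe_sub_iff_le.mpr le_rfl]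

lemma val_sub_of_lt {a b : Fin n} (h : a < b) : (a - b).val = n - (b.val - a.val) := by
  have := Fin.coe_sub_iff_lt.mpr h
  omega

lemma cycDist_eq_min_dist (a b : Fin n) :
    cycDist a b = min (Nat.dist a b) (n - Nat.dist a b) := by
  have := a.isLt; have := b.isLt
  rcases lt_trichotomy a b with h | rfl | h
  · rw [cycDist, val_sub_of_lt h, Fin.coe_sub_iff_le.mpr h.le,
      Nat.dist_eq_sub_of_le (Fin.lt_def.mp h).le, min_comm]
  · simp [cycDist_self]
  · rw [cycDist, val_sub_of_lt h, Fin.coe_sub_iff_le.mpr h.le, Nat.dist_comm,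
      Nat.dist_eq_sub_of_le (Fin.lt_def.mp h).le]

lemma cycDist_le_cycDist_succAbove (x : Fin (n + 1)) (i j : Fin n) :
    cycDist i j ≤ cycDist (x.succAbove i) (x.succAbove j) := by
  rw [cycDist_eq_min_dist, cycDist_eq_min_dist]
  simp only [Fin.succAbove, Fin.lt_def, Fin.val_castSucc, Nat.dist]
  have := i.isLt; have := j.isLt
  split_ifs <;> simp only [Fin.val_castSucc, Fin.val_succ] <;> omega

def arc (i : Fin n) (k : ℕ) : Finset (Fin n) := {x | (x - i).val < k}

lemma mem_arc {i x : Fin n} {k : ℕ} : x ∈ arc i k ↔ (x - i).val < k := by simp [arc]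

variable [NeZero n]

lemma cycDist_add_mk (a : Fin n) {t : ℕ} (ht : t < n) :
    cycDist a (a + ⟨t, ht⟩) = min t (n - t) := by
  rw [cycDist, sub_add_eq_sub_sub, sub_self, zero_sub, add_sub_cancel_left, min_comm]
  rcases Nat.eq_zero_or_pos t with rfl | ht0
  · simp
  · rw [neg_eq_zero_sub, val_sub_of_lt (Fin.lt_def.mpr ht0)]
    simp

lemma card_arc (i : Fin n) {k : ℕ} (hk : k ≤ n) : #(arc i k) = k := by
  rw [← card_range k]
  refine card_nbij (fun x => (x - i).val) (fun x hx => by simpa [mem_arc] using hx)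
    (fun x _ y _ hxy => sub_left_injective (Fin.ext hxy)) (fun t ht => ?_)
  have ht' : t < n := (mem_range.mp ht).trans_le hk
  refine ⟨i + ⟨t, ht'⟩, ?_, ?_⟩ <;> simp [mem_arc, mem_range.mp ht]

lemma cycDist_lt_of_mem_arc {i j x : Fin n} {k : ℕ} (hi : x ∈ arc i k) (hj : x ∈ arc j k) :
    cycDist i j < k := by
  rw [mem_arc] at hi hj
  have hij : i - j = (x - j) - (x - i) := by abel
  have hji : j - i = (x - i) - (x - j) := by abel
  rcases le_total (x - i) (x - j) with h | h
  · have := Fin.coe_sub_iff_le.mpr h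
    exact (min_le_left _ _).trans_lt (by rw [hij, this]; omega)
  · have := Fin.coe_sub_iff_le.mpr h
    exact (min_le_right _ _).trans_lt (by rw [hji, this]; omega)

lemma two_mul_sum_le_of_add_shift_le (f : Fin n → ℕ) (c : Fin n) {B : ℕ}
    (h : ∀ z, f z + f (z + c) ≤ B) : 2 * ∑ z, f z ≤ n * B :=
  calc 2 * ∑ z, f z = ∑ z, (f z + f (z + c)) := by
        rw [sum_add_distrib, Fintype.sum_equiv (Equiv.addRight c) (fun z => f (z + c)) f fun _ => rfl,
          two_mul]
    _ ≤ ∑ _z : Fin n, B := sum_le_sum fun z _ => h z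
    _ = n * B := by simp

end Circle

section CrossClose

variable {k m : ℕ} [NeZero m] {A B : Finset (Fin m)}

lemma card_add_card_le_of_two_mul_eq (hm : 2 * k = m)
    (h : ∀ a ∈ A, ∀ b ∈ B, cycDist a b < k) : #A + #B ≤ 2 * k := by
  have hk : k < m := by have := NeZero.pos m; omega
  set c : Fin m := ⟨k, hk⟩
  have hfar (z : Fin m) : cycDist z (z + c) = k := by rw [cycDist_add_mk]; omega
  have hpair (z : Fin m) : ((if z ∈ A then 1 else 0) + if z ∈ B then 1 else 0) +
      ((if z + c ∈ A then 1 else 0) + if z + c ∈ B then 1 else 0) ≤ 2 := by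
    have h₁ : z ∈ A → z + c ∉ B := fun ha hb => (h _ ha _ hb).ne (hfar z)
    have h₂ : z + c ∈ A → z ∉ B := fun ha hb =>
      (h _ ha _ hb).ne (by rw [cycDist_comm, hfar])
    split_ifs <;> simp_all
  have := two_mul_sum_le_of_add_shift_le _ c hpair
  simp only [sum_add_distrib, sum_boole, filter_mem_eq_inter, univ_inter, Nat.cast_id] at this
  omega

lemma exists_notMem_union_of_cycDist_lt (hm : 2 * k < m) (hA : A.Nonempty) (hB : B.Nonempty)
    (h : ∀ a ∈ A, ∀ b ∈ B, cycDist a b < k) : ∃ x, x ∉ A ∧ x ∉ B := by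
  by_contra! hcover
  obtain ⟨a, ha⟩ := hA
  obtain ⟨b, hb⟩ := hB
  have hk : k + 1 < m := by have := Nat.zero_lt_of_lt (h a ha b hb); omega
  have forward (z : Fin m) {t : ℕ} (ht : t < m) (hkt : k ≤ min t (m - t)) (hz : z ∈ A) :
      z + ⟨t, ht⟩ ∈ A := by
    by_contra hz'
    exact (h _ hz _ (hcover _ hz')).not_ge (by rwa [cycDist_add_mk])
  have backward (z : Fin m) {t : ℕ} (ht : t < m) (hkt : k ≤ min t (m - t))
      (hz : z + ⟨t, ht⟩ ∈ A) : z ∈ A := by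
    by_contra hz'
    exact (h _ hz _ (hcover _ hz')).not_ge (by rwa [cycDist_comm, cycDist_add_mk])
  -- `A` is invariant under the shifts by `k` and by `k + 1`, hence under the shift by `1`.
  have hstep (z : Fin m) (hz : z ∈ A) : z + 1 ∈ A := by
    have hone : (1 : Fin m) + ⟨k, by omega⟩ = ⟨k + 1, hk⟩ := by
      ext; simp [Fin.val_add, Nat.mod_eq_of_lt (by omega : 1 + k < m)]; omega
    refine backward (z + 1) (t := k) (by omega) (by omega) ?_
    rw [add_assoc, hone]
    exact forward z hk (by omega) hz
  have hshift (t : ℕ) (z : Fin m) (hz : z ∈ A) : z + (t : Fin m) ∈ A := by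
    induction t with
    | zero => simpa using hz
    | succ t ih => simpa [← add_assoc] using hstep _ ih
  have hbA : b + ⟨k, by omega⟩ ∈ A := by
    simpa using hshift (b + ⟨k, by omega⟩ - a).val a ha
  exact (h _ hbA _ hb).not_ge (by rw [cycDist_comm, cycDist_add_mk]; omega)

end CrossClose

lemma card_preimage_succAbove {m : ℕ} {x : Fin (m + 1)} {A : Finset (Fin (m + 1))} (hx : x ∉ A) :
    #(A.preimage x.succAbove Fin.succAbove_right_injective.injOn) = #A := by
  rw [card_preimage, filter_true_of_mem]
  intro y hy
  exact Fin.exists_succAbove_eq_iff.mpr (ne_of_mem_of_not_mem hy hx)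

theorem card_add_card_le_of_cycDist_lt {k : ℕ} {m : ℕ} (hm : 2 * k ≤ m)
    {A B : Finset (Fin m)} (hA : A.Nonempty) (hB : B.Nonempty)
    (h : ∀ a ∈ A, ∀ b ∈ B, cycDist a b < k) : #A + #B ≤ 2 * k := by
  induction m using Nat.strong_induction_on with
  | _ m ih =>
  have : NeZero m := ⟨hA.choose.pos.ne'⟩
  rcases hm.eq_or_lt with hm | hm
  · exact card_add_card_le_of_two_mul_eq hm h
  -- on a longer cycle, delete a point outside `A ∪ B`; this only shrinks distances
  obtain ⟨x, hxA, hxB⟩ := exists_notMem_union_of_cycDist_lt hm hA hB h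
  obtain ⟨m, rfl⟩ : ∃ m', m = m' + 1 := ⟨m - 1, by omega⟩
  rw [← card_preimage_succAbove hxA, ← card_preimage_succAbove hxB]
  refine ih m (by omega) (by omega) ?_ ?_ fun a ha b hb => ?_
  · rw [← card_pos, card_preimage_succAbove hxA]; exact hA.card_pos
  · rw [← card_pos, card_preimage_succAbove hxB]; exact hB.card_pos
  · rw [mem_preimage] at ha hb
    exact (cycDist_le_cycDist_succAbove x a b).trans_lt (h _ ha _ hb)

theorem sum_le_max_of_cycDist {k l N m : ℕ} (hN : 2 * k ≤ N) (hm : 2 * l ≤ m) (w : Fin m → ℕ)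
    (hw : ∀ j, w j ≤ N)
    (hfar : ∀ i j, l ≤ cycDist i j → w i ≠ 0 → w j ≠ 0 → w i + w j ≤ 2 * k) :
    ∑ j, w j ≤ max (k * m) (l * N) := by
  induction m using Nat.strong_induction_on with
  | _ m ih =>
  rcases Nat.eq_zero_or_pos m with rfl | hm0
  · simp
  have : NeZero m := ⟨hm0.ne'⟩
  have hc : m / 2 < m := by omega
  have hc_far (z : Fin m) : l ≤ cycDist z (z + ⟨m / 2, hc⟩) := by rw [cycDist_add_mk]; omega
  by_cases hz : ∀ j, w j ≠ 0
  · have := two_mul_sum_le_of_add_shift_le w _ fun z => hfar _ _ (hc_far z) (hz _) (hz _)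
    have : m * (2 * k) = 2 * (k * m) := by ring
    exact le_max_of_le_left (by omega)
  obtain ⟨x, hx⟩ : ∃ x, w x = 0 := by simpa using hz
  rcases hm.eq_or_lt with hm | hm
  · have hpair (z : Fin m) : w z + w (z + ⟨m / 2, hc⟩) ≤ N := by
      by_cases h₁ : w z = 0
      · simpa [h₁] using hw _
      by_cases h₂ : w (z + ⟨m / 2, hc⟩) = 0
      · simpa [h₂] using hw _
      exact (hfar _ _ (hc_far z) h₁ h₂).trans hN
    have := two_mul_sum_le_of_add_shift_le w _ hpair
    have : m * N = 2 * (l * N) := by rw [← hm]; ring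
    exact le_max_of_le_right (by omega)
  obtain ⟨m, rfl⟩ : ∃ m', m = m' + 1 := ⟨m - 1, by omega⟩
  rw [Fin.sum_univ_succAbove w x, hx, zero_add]
  refine (ih m (by omega) (by omega) _ (fun j => hw _) fun i j hij => ?_).trans
    (max_le_max (Nat.mul_le_mul_left _ (by omega)) le_rfl)
  exact hfar _ _ (hij.trans (cycDist_le_cycDist_succAbove x i j))

theorem card_le_max_of_cycDist_lt_or {k l m m' : ℕ} (hm : 2 * k ≤ m) (hm' : 2 * l ≤ m')
    (T : Finset (Fin m × Fin m'))
    (hT : ∀ p ∈ T, ∀ q ∈ T, cycDist p.1 q.1 < k ∨ cycDist p.2 q.2 < l) :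
    #T ≤ max (k * m') (l * m) := by
  set column : Fin m' → Finset (Fin m) := fun j => {i | (i, j) ∈ T}
  have hcard : #T = ∑ j, #(column j) := by
    simp only [column, card_filter]
    rw [← Fintype.sum_prod_type_right (f := fun p => if p ∈ T then 1 else 0), sum_boole]
    simp
  rw [hcard]
  refine sum_le_max_of_cycDist hm hm' _ (fun j => card_le_univ _ |>.trans_eq (Fintype.card_fin m))
    fun j j' hjj' hj hj' => card_add_card_le_of_cycDist_lt hm (card_pos.mp (Nat.pos_of_ne_zero hj))
      (card_pos.mp (Nat.pos_of_ne_zero hj')) fun a ha b hb => ?_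
  simp only [column, mem_filter, mem_univ, true_and] at ha hb
  exact (hT _ ha _ hb).resolve_right hjj'.not_gt

section Traces

variable {α : Type*} [DecidableEq α] {n k : ℕ}

def arcStarts {X : Finset α} (e : Fin n ≃ X) (k : ℕ) (A : Finset α) : Finset (Fin n) :=
  {i | ∀ x, x ∈ arc i k ↔ (e x : α) ∈ A}

lemma inter_eq_of_mem_arcStarts {X A B : Finset α} {e : Fin n ≃ X} {i : Fin n}
    (hA : i ∈ arcStarts e k A) (hB : i ∈ arcStarts e k B) : A ∩ X = B ∩ X := by
  simp only [arcStarts, mem_filter, mem_univ, true_and] at hA hB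
  ext y
  simp only [mem_inter, and_congr_left_iff]
  intro hy
  simpa using (hA (e.symm ⟨y, hy⟩)).symm.trans (hB (e.symm ⟨y, hy⟩))

variable [NeZero n]

lemma cycDist_lt_of_mem_arcStarts {X A B : Finset α} {e : Fin n ≃ X} {i j : Fin n}
    (hi : i ∈ arcStarts e k A) (hj : j ∈ arcStarts e k B) {y : α} (hyX : y ∈ X) (hyA : y ∈ A)
    (hyB : y ∈ B) : cycDist i j < k := by
  simp only [arcStarts, mem_filter, mem_univ, true_and] at hi hj
  exact cycDist_lt_of_mem_arc ((hi (e.symm ⟨y, hyX⟩)).mpr (by simpa using hyA))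
    ((hj (e.symm ⟨y, hyX⟩)).mpr (by simpa using hyB))

theorem sum_card_arcStarts {X A : Finset α} (hX : #X = n) (hk : k ≤ n) (hA : #(A ∩ X) = k) :
    ∑ e : Fin n ≃ X, #(arcStarts e k A) = n * (k ! * (n - k)!) := by
  have hcount (i : Fin n) :
      #({e | ∀ x, x ∈ arc i k ↔ (e x : α) ∈ A} : Finset (Fin n ≃ X)) = k ! * (n - k)! := by
    have hA' : Fintype.card {y : X // (y : α) ∈ A} = #(A ∩ X) := by
      rw [Fintype.card_subtype, ← card_map (Function.Embedding.subtype _)]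
      congr 1; ext; simp [and_comm]
    convert card_equiv_preserving (· ∈ arc i k) (fun y : X => (y : α) ∈ A) (by simp [hX]) ?_
      using 2
    · ext; simp
    · simp [card_arc i hk]
    · simp [Fintype.card_subtype_compl, card_arc i hk]
    · simp [card_arc i hk, hA', hA]
  simp only [arcStarts, card_filter]
  rw [sum_comm]
  simp_rw [← card_filter, hcount]
  simp

theorem sum_card_arcStarts_mul_le {X₁ X₂ : Finset α} {n₁ n₂ ℓ : ℕ} [NeZero n₁] [NeZero n₂]
    (h2k : 2 * k ≤ n₁) (h2l : 2 * ℓ ≤ n₂) (e₁ : Fin n₁ ≃ X₁) (e₂ : Fin n₂ ≃ X₂)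
    {F : Finset (Finset α)} (hsub : ∀ A ∈ F, A ⊆ X₁ ∪ X₂)
    (hint : ∀ A ∈ F, ∀ B ∈ F, (A ∩ B).Nonempty) :
    ∑ A ∈ F, #(arcStarts e₁ k A) * #(arcStarts e₂ ℓ A) ≤ max (k * n₂) (ℓ * n₁) := by
  simp_rw [← card_product]
  rw [← card_biUnion]
  · refine card_le_max_of_cycDist_lt_or h2k h2l _ fun p hp q hq => ?_
    simp only [mem_biUnion, mem_product] at hp hq
    obtain ⟨A, hA, hp₁, hp₂⟩ := hp
    obtain ⟨B, hB, hq₁, hq₂⟩ := hq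
    obtain ⟨y, hy⟩ := hint A hA B hB
    obtain ⟨hyA, hyB⟩ := mem_inter.mp hy
    rcases mem_union.mp (hsub A hA hyA) with hy | hy
    · exact .inl (cycDist_lt_of_mem_arcStarts hp₁ hq₁ hy hyA hyB)
    · exact .inr (cycDist_lt_of_mem_arcStarts hp₂ hq₂ hy hyA hyB)
  · intro A hA B hB hAB
    refine disjoint_left.mpr fun p hpA hpB => hAB ?_
    rw [mem_product] at hpA hpB
    -- a member of `F` is determined by its traces on `X₁` and `X₂`
    rw [← inter_eq_left.mpr (hsub A hA), ← inter_eq_left.mpr (hsub B hB),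
      inter_union_distrib_left, inter_union_distrib_left,
      inter_eq_of_mem_arcStarts hpA.1 hpB.1, inter_eq_of_mem_arcStarts hpA.2 hpB.2]

theorem card_mul_le_of_intersecting {X₁ X₂ : Finset α} {n₁ n₂ ℓ : ℕ} [NeZero n₁] [NeZero n₂]
    (hn₁ : #X₁ = n₁) (hn₂ : #X₂ = n₂) (h2k : 2 * k ≤ n₁) (h2l : 2 * ℓ ≤ n₂)
    {F : Finset (Finset α)} (hsub : ∀ A ∈ F, A ⊆ X₁ ∪ X₂)
    (hsizes : ∀ A ∈ F, #(A ∩ X₁) = k ∧ #(A ∩ X₂) = ℓ)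
    (hint : ∀ A ∈ F, ∀ B ∈ F, (A ∩ B).Nonempty) :
    #F * (n₁ * (k ! * (n₁ - k)!) * (n₂ * (ℓ ! * (n₂ - ℓ)!))) ≤
      n₁ ! * n₂ ! * max (k * n₂) (ℓ * n₁) :=
  calc #F * (n₁ * (k ! * (n₁ - k)!) * (n₂ * (ℓ ! * (n₂ - ℓ)!)))
      = ∑ A ∈ F, (∑ e₁ : Fin n₁ ≃ X₁, #(arcStarts e₁ k A)) *
          ∑ e₂ : Fin n₂ ≃ X₂, #(arcStarts e₂ ℓ A) := by
        rw [card_eq_sum_ones, sum_mul]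
        refine sum_congr rfl fun A hA => ?_
        rw [sum_card_arcStarts hn₁ (by omega) (hsizes A hA).1,
          sum_card_arcStarts hn₂ (by omega) (hsizes A hA).2, one_mul]
    _ = ∑ e₁ : Fin n₁ ≃ X₁, ∑ e₂ : Fin n₂ ≃ X₂,
          ∑ A ∈ F, #(arcStarts e₁ k A) * #(arcStarts e₂ ℓ A) := by
        simp_rw [sum_mul_sum]
        rw [sum_comm]
        exact sum_congr rfl fun _ _ => sum_comm
    _ ≤ ∑ _e₁ : Fin n₁ ≃ X₁, ∑ _e₂ : Fin n₂ ≃ X₂, max (k * n₂) (ℓ * n₁) :=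
        sum_le_sum fun e₁ _ => sum_le_sum fun e₂ _ =>
          sum_card_arcStarts_mul_le h2k h2l e₁ e₂ hsub hint
    _ = n₁ ! * n₂ ! * max (k * n₂) (ℓ * n₁) := by
        simp only [sum_const, card_univ, smul_eq_mul,
          Fintype.card_equiv (X₁.equivFinOfCardEq hn₁).symm,
          Fintype.card_equiv (X₂.equivFinOfCardEq hn₂).symm, Fintype.card_fin]
        ring

end Traces

lemma choose_mul_eq {n k : ℕ} (hkn : k ≤ n) :
    n.choose k * (n * (k ! * (n - k)!)) = n * n ! := by
  rw [← Nat.choose_mul_factorial_mul_factorial hkn]; ring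

lemma choose_pred_mul_eq {n k : ℕ} (hk : 0 < k) (hkn : k ≤ n) :
    (n - 1).choose (k - 1) * (n * (k ! * (n - k)!)) = k * n ! := by
  have h : (n - 1).choose (k - 1) * n = n.choose k * k := by
    have := Nat.add_one_mul_choose_eq (n - 1) (k - 1)
    rw [Nat.sub_add_cancel hk, Nat.sub_add_cancel (hk.trans_le hkn)] at this
    rw [mul_comm, this]
  calc (n - 1).choose (k - 1) * (n * (k ! * (n - k)!))
      = (n - 1).choose (k - 1) * n * (k ! * (n - k)!) := by ring
    _ = k * (n.choose k * k ! * (n - k)!) := by rw [h]; ring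
    _ = k * n ! := by rw [Nat.choose_mul_factorial_mul_factorial hkn]

end KatonaCircle

open KatonaCircle in
theorem stmt11_general {α : Type*} [DecidableEq α] (X₁ X₂ : Finset α)
    (n₁ n₂ k ℓ : ℕ) (hn₁ : X₁.card = n₁) (hn₂ : X₂.card = n₂)
    (hk : 0 < k) (hl : 0 < ℓ) (h2k : 2 * k ≤ n₁) (h2l : 2 * ℓ ≤ n₂)
    (F : Finset (Finset α)) (hsub : ∀ A ∈ F, A ⊆ X₁ ∪ X₂)
    (hsizes : ∀ A ∈ F, (A ∩ X₁).card = k ∧ (A ∩ X₂).card = ℓ)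
    (hint : ∀ A ∈ F, ∀ B ∈ F, (A ∩ B).Nonempty) :
    F.card ≤ max ((n₁ - 1).choose (k - 1) * n₂.choose ℓ)
                 (n₁.choose k * (n₂ - 1).choose (ℓ - 1)) := by
  have : NeZero n₁ := ⟨by omega⟩
  have : NeZero n₂ := ⟨by omega⟩
  have hD : 0 < n₁ * (k ! * (n₁ - k)!) * (n₂ * (ℓ ! * (n₂ - ℓ)!)) := by
    have := NeZero.pos n₁; have := NeZero.pos n₂; positivity
  refine Nat.le_of_mul_le_mul_right ?_ hD
  calc F.card * (n₁ * (k ! * (n₁ - k)!) * (n₂ * (ℓ ! * (n₂ - ℓ)!)))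
      ≤ n₁ ! * n₂ ! * max (k * n₂) (ℓ * n₁) :=
        card_mul_le_of_intersecting hn₁ hn₂ h2k h2l hsub hsizes hint
    _ = max (k * n₁ ! * (n₂ * n₂ !)) (n₁ * n₁ ! * (ℓ * n₂ !)) := by
        rw [mul_max_of_nonneg _ _ (Nat.zero_le _)]
        congr 1 <;> ring
    _ = _ := by
        rw [max_mul_of_nonneg _ _ (Nat.zero_le _), ← choose_pred_mul_eq hk (by omega),
          ← choose_mul_eq (by omega : ℓ ≤ n₂), ← choose_mul_eq (by omega : k ≤ n₁),
          ← choose_pred_mul_eq hl (by omega)]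
        congr 1 <;> ring

theorem stmt11 {α : Type*} [DecidableEq α] (X₁ X₂ : Finset α) (hdisj : Disjoint X₁ X₂)
    (n₁ n₂ k ℓ : ℕ) (hn₁ : X₁.card = n₁) (hn₂ : X₂.card = n₂)
    (hk : 0 < k) (hl : 0 < ℓ) (h2k : 2 * k ≤ n₁) (h2l : 2 * ℓ ≤ n₂)
    (F : Finset (Finset α)) (hsub : ∀ A ∈ F, A ⊆ X₁ ∪ X₂)
    (hsizes : ∀ A ∈ F, (A ∩ X₁).card = k ∧ (A ∩ X₂).card = ℓ)
    (hint : ∀ A ∈ F, ∀ B ∈ F, (A ∩ B).Nonempty) :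
    F.card ≤ max ((n₁ - 1).choose (k - 1) * n₂.choose ℓ)
                 (n₁.choose k * (n₂ - 1).choose (ℓ - 1)) :=
  stmt11_general X₁ X₂ n₁ n₂ k ℓ hn₁ hn₂ hk hl h2k h2l F hsub hsizes hint
end
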